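/- arXiv:1010.2286 — 2 statements merged into one kernel-verified Lean document; each statement's English description precedes it below -/
import Mathlib

section
/- Let W be uniformly distributed on [N] with N ≥ 2, and let Z^T = (Z_1,…,Z_T) be generated by interconnecting a randomly chosen system θ_W with a controller, with Z_t = (Y_t, U_t), where for each t, W → (Y_t, Z^{t−1}) → U_t is a Markov chain. Then for any sequence of Markov kernels Q_{Y_t|Z^{t−1}} dominating the conditional laws P_{Y_t|Z^{t−1}}, the bound (log N)·min_{i∈[N]} P(θ̂_T = θ_i | W = i) ≤ Σ_{t=1}^T D(P_{Y_t|Z^{t−1},W} ∥ Q_{Y_t|Z^{t−1}} | P_{U_t,Z^{t−1},W}) + log 2 holds for any measurable estimator θ̂_T of θ_W taking values in {θ_1,…,θ_N}. -/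
open Finset

variable {Y U : Type*} [Fintype Y] [Fintype U]

/-- A (time-varying) stochastic system over finite alphabets: for each time `t`,
a conditional pmf on the next output given the input/output history `(y^t, u^t)`. -/
def SysKer (Y U : Type*) : Type _ := ∀ t : ℕ, (Fin t → Y × U) → Y → ℝ

/-- A randomized controller: a conditional pmf on the next input given the history
and the current output. -/
def CtrlKer (Y U : Type*) : Type _ := ∀ t : ℕ, (Fin t → Y × U) → Y → U → ℝ

/-- Validity of a system kernel as a family of pmfs. -/
def IsPmfSys [Fintype Y] (P : SysKer Y U) : Prop :=
  ∀ t h, (∀ y, 0 ≤ P t h y) ∧ ∑ y, P t h y = 1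

/-- Validity of a controller kernel as a family of pmfs. -/
def IsPmfCtrl [Fintype U] (Q : CtrlKer Y U) : Prop :=
  ∀ t h y, (∀ u, 0 ≤ Q t h y u) ∧ ∑ u, Q t h y u = 1

/-- The probability of a length-`T` trajectory `h` under the interconnection of the
system `P` with the controller `Q`. -/
def trajProb (P : SysKer Y U) (Q : CtrlKer Y U) (T : ℕ) (h : Fin T → Y × U) : ℝ :=
  ∏ t : Fin T,
    P t.1 (fun i : Fin t.1 => h ⟨i.1, i.2.trans t.2⟩) (h t).1 *
      Q t.1 (fun i : Fin t.1 => h ⟨i.1, i.2.trans t.2⟩) (h t).1 (h t).2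

/-- Kullback–Leibler divergence between two pmfs on a finite alphabet. -/
noncomputable def klFin [Fintype Y] (p q : Y → ℝ) : ℝ :=
  ∑ y, p y * Real.log (p y / q y)

/-!
Compare the joint law `p` of `(W, Z^T)` with `q = Unif(N) ⊗ Q^T`, where `Q^T` is the closed loop
of the auxiliary kernel `Qk` with the same controller `γ`. Under `q` the trajectory is independent
of `W`, so the success event `{est = W}` has `q`-probability `1/N`. The log-sum inequality on this
event and its complement, followed by `binEntropy ≤ log 2`, gives Fano's bound
`p(est = W) · log N ≤ D(p ‖ q) + log 2`. By the chain rule `D(p ‖ q)` splits over time, and the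
controller factor, common to both closed loops, cancels at every step, leaving the conditional
divergences between `θ_W` and `Qk`. Finally the worst-case success probability is at most the
average one.
-/

open Real

section KullbackLeibler

variable {α β : Type*} [Fintype α] [Fintype β]

theorem klFin_self (p : α → ℝ) : klFin p p = 0 :=
  sum_eq_zero fun x _ => by rcases eq_or_ne (p x) 0 with h | h <;> simp [h]

theorem klFin_comp_equiv (e : β ≃ α) (p q : α → ℝ) : klFin (p ∘ e) (q ∘ e) = klFin p q :=
  e.sum_comp fun x => p x * log (p x / q x)

theorem mul_mul_log_mul_div_mul {p q k l : ℝ} (hpq : q = 0 → p = 0) (hkl : l = 0 → k = 0) :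
    p * k * log (p * k / (q * l)) = p * k * log (p / q) + p * (k * log (k / l)) := by
  rcases eq_or_ne p 0 with rfl | hp
  · simp
  rcases eq_or_ne k 0 with rfl | hk
  · simp
  have hq : q ≠ 0 := mt hpq hp
  have hl : l ≠ 0 := mt hkl hk
  rw [mul_div_mul_comm, log_mul (div_ne_zero hp hq) (div_ne_zero hk hl)]
  ring

theorem klFin_mul_kernel (p q : α → ℝ) (k l : α → β → ℝ) (hk : ∀ a, ∑ b, k a b = 1)
    (hpq : ∀ a, q a = 0 → p a = 0) (hkl : ∀ a b, l a b = 0 → k a b = 0) :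
    klFin (fun x : α × β => p x.1 * k x.1 x.2) (fun x => q x.1 * l x.1 x.2)
      = klFin p q + ∑ a, p a * klFin (k a) (l a) := by
  rw [klFin, klFin, Fintype.sum_prod_type, ← sum_add_distrib]
  refine sum_congr rfl fun a _ => ?_
  simp only [mul_mul_log_mul_div_mul (hpq a) (hkl a _), sum_add_distrib, ← sum_mul, ← mul_sum,
    hk, mul_one, klFin]

/-- The tangent-line bound `log x ≥ 1 - 1/x` at `x = p / (c q)`; summed over `x` with
`c = ∑ p / ∑ q` it yields the log-sum inequality. -/
theorem mul_log_add_sub_mul_le_mul_log_div {p q c : ℝ} (hp : 0 ≤ p) (hq : 0 ≤ q)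
    (hpq : q = 0 → p = 0) (hc : 0 < c) : p * log c + p - c * q ≤ p * log (p / q) := by
  rcases hp.eq_or_lt with rfl | hp
  · simpa using mul_nonneg hc.le hq
  have hq : 0 < q := hq.lt_of_ne fun h => hp.ne' (hpq h.symm)
  have key := mul_le_mul_of_nonneg_left (one_sub_inv_le_log_of_pos (x := p / (c * q))
    (by positivity)) hp.le
  rw [log_div hp.ne' (by positivity), log_mul hc.ne' hq.ne', inv_div, mul_sub, mul_one,
    mul_div_cancel₀ _ hp.ne'] at key
  rw [log_div hp.ne' hq.ne']
  linarith

theorem sum_mul_log_div_sum_le {ι : Type*} (s : Finset ι) {p q : ι → ℝ}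
    (hp : ∀ x ∈ s, 0 ≤ p x) (hq : ∀ x ∈ s, 0 ≤ q x) (hpq : ∀ x ∈ s, q x = 0 → p x = 0) :
    (∑ x ∈ s, p x) * log ((∑ x ∈ s, p x) / ∑ x ∈ s, q x) ≤ ∑ x ∈ s, p x * log (p x / q x) := by
  rcases (sum_nonneg hp).eq_or_lt with hp0 | hp0
  · have hzero := (sum_eq_zero_iff_of_nonneg hp).1 hp0.symm
    rw [← hp0, zero_mul]
    exact (sum_eq_zero fun x hx => by rw [hzero x hx, zero_mul]).ge
  have hq0 : 0 < ∑ x ∈ s, q x := by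
    refine (sum_nonneg hq).lt_of_ne fun h => hp0.ne' (sum_eq_zero fun x hx => hpq x hx ?_)
    exact (sum_eq_zero_iff_of_nonneg hq).1 h.symm x hx
  set c := (∑ x ∈ s, p x) / ∑ x ∈ s, q x
  calc (∑ x ∈ s, p x) * log c = ∑ x ∈ s, (p x * log c + p x - c * q x) := by
        rw [sum_sub_distrib, sum_add_distrib, ← sum_mul, ← mul_sum, div_mul_cancel₀ _ hq0.ne']
        ring
    _ ≤ ∑ x ∈ s, p x * log (p x / q x) := sum_le_sum fun x hx =>
        mul_log_add_sub_mul_le_mul_log_div (hp x hx) (hq x hx) (hpq x hx) (by positivity)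

theorem mul_log_inv_le_binaryKL_add_log_two {a b : ℝ} (ha₀ : 0 ≤ a) (ha₁ : a ≤ 1) (hb₀ : 0 < b)
    (hb₁ : b ≤ 1) :
    a * log b⁻¹ ≤ a * log (a / b) + (1 - a) * log ((1 - a) / (1 - b)) + log 2 := by
  have hfirst : a * log (a / b) = a * log a + a * log b⁻¹ := by
    rcases ha₀.eq_or_lt with rfl | ha
    · simp
    rw [div_eq_mul_inv, log_mul ha.ne' (inv_pos.2 hb₀).ne', mul_add]
  have hsecond : (1 - a) * log (1 - a) ≤ (1 - a) * log ((1 - a) / (1 - b)) := by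
    rcases (sub_nonneg.2 hb₁).eq_or_lt with hb | hb
    · rw [← hb, div_zero, log_zero, mul_zero]
      exact mul_log_nonpos (by linarith) (by linarith)
    rcases (sub_nonneg.2 ha₁).eq_or_lt with ha | ha
    · rw [← ha, zero_mul, zero_mul]
    rw [log_div ha.ne' hb.ne']
    have : log (1 - b) ≤ 0 := log_nonpos hb.le (by linarith)
    nlinarith
  have hentropy := binEntropy_le_log_two (p := a)
  rw [binEntropy, log_inv, log_inv] at hentropy
  linarith

theorem mul_log_inv_le_klFin_add_log_two {p q : α → ℝ} (hp : ∀ x, 0 ≤ p x) (hq : ∀ x, 0 ≤ q x)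
    (hp₁ : ∑ x, p x = 1) (hq₁ : ∑ x, q x = 1) (hpq : ∀ x, q x = 0 → p x = 0) (s : Finset α)
    (hs : 0 < ∑ x ∈ s, q x) :
    (∑ x ∈ s, p x) * log (∑ x ∈ s, q x)⁻¹ ≤ klFin p q + log 2 := by
  classical
  have hpc : ∑ x ∈ sᶜ, p x = 1 - ∑ x ∈ s, p x := by rw [← hp₁, ← sum_compl_add_sum s]; ring
  have hqc : ∑ x ∈ sᶜ, q x = 1 - ∑ x ∈ s, q x := by rw [← hq₁, ← sum_compl_add_sum s]; ring
  have hle : ∀ f : α → ℝ, (∀ x, 0 ≤ f x) → ∑ x ∈ s, f x ≤ ∑ x, f x := fun f hf =>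
    sum_le_univ_sum_of_nonneg hf
  calc (∑ x ∈ s, p x) * log (∑ x ∈ s, q x)⁻¹
      ≤ (∑ x ∈ s, p x) * log ((∑ x ∈ s, p x) / ∑ x ∈ s, q x)
          + (∑ x ∈ sᶜ, p x) * log ((∑ x ∈ sᶜ, p x) / ∑ x ∈ sᶜ, q x) + log 2 := by
        rw [hpc, hqc]
        exact mul_log_inv_le_binaryKL_add_log_two (sum_nonneg fun x _ => hp x)
          (hp₁ ▸ hle p hp) hs (hq₁ ▸ hle q hq)
    _ ≤ klFin p q + log 2 := by
        rw [klFin, ← sum_add_sum_compl s]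
        gcongr
        · exact sum_mul_log_div_sum_le s (fun x _ => hp x) (fun x _ => hq x) fun x _ => hpq x
        · exact sum_mul_log_div_sum_le sᶜ (fun x _ => hp x) (fun x _ => hq x) fun x _ => hpq x

theorem fano_inequality {N : ℕ} (hN : 0 < N) {P : Fin N → β → ℝ}
    {Q : β → ℝ} (hP : ∀ i x, 0 ≤ P i x) (hP₁ : ∀ i, ∑ x, P i x = 1) (hQ : ∀ x, 0 ≤ Q x)
    (hQ₁ : ∑ x, Q x = 1) (hPQ : ∀ i x, Q x = 0 → P i x = 0) (est : β → Fin N) :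
    (∑ i, ∑ x ∈ univ.filter (est · = i), P i x) / N * log N
      ≤ (∑ i, klFin (P i) Q) / N + log 2 := by
  have hN' : (N : ℝ) ≠ 0 := by positivity
  set p : Fin N × β → ℝ := fun x => (N : ℝ)⁻¹ * P x.1 x.2
  set q : Fin N × β → ℝ := fun x => (N : ℝ)⁻¹ * Q x.2
  set A := univ.filter fun x : Fin N × β => est x.2 = x.1
  have hpA : ∑ x ∈ A, p x = (∑ i, ∑ x ∈ univ.filter (est · = i), P i x) / N := by
    simp [A, p, sum_filter, Fintype.sum_prod_type, mul_sum, div_eq_inv_mul]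
  have hqA : ∑ x ∈ A, q x = (N : ℝ)⁻¹ := by
    simp [A, q, sum_filter, Fintype.sum_prod_type_right, ← mul_sum, hQ₁]
  have hD : klFin p q = (∑ i, klFin (P i) Q) / N := by
    rw [klFin_mul_kernel (fun _ => (N : ℝ)⁻¹) (fun _ => (N : ℝ)⁻¹) P (fun _ => Q) hP₁
      (fun _ => id) hPQ, klFin_self]
    simp [mul_sum, div_eq_inv_mul]
  have hfano := mul_log_inv_le_klFin_add_log_two (p := p) (q := q)
    (fun x => mul_nonneg (by positivity) (hP _ _)) (fun x => mul_nonneg (by positivity) (hQ _))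
    (by simp [p, Fintype.sum_prod_type, ← mul_sum, hP₁, hN'])
    (by simp [q, Fintype.sum_prod_type, ← mul_sum, hQ₁, hN'])
    (fun x hx => by simpa [p, hN'] using hPQ x.1 x.2 (by simpa [q, hN'] using hx)) A
    (hqA ▸ by positivity)
  rwa [hpA, hqA, inv_inv, hD] at hfano

end KullbackLeibler

def snocProdEquiv (A : Type*) (T : ℕ) : (Fin T → A) × A ≃ (Fin (T + 1) → A) :=
  (Equiv.prodComm _ _).trans (Fin.snocEquiv fun _ => A)

theorem snocProdEquiv_apply (A : Type*) (T : ℕ) (x : (Fin T → A) × A) :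
    snocProdEquiv A T x = Fin.snoc x.1 x.2 :=
  rfl

section Trajectory

variable {P Q : SysKer Y U} {γ : CtrlKer Y U}

def stepProb (P : SysKer Y U) (γ : CtrlKer Y U) (t : ℕ) (h : Fin t → Y × U) (z : Y × U) : ℝ :=
  P t h z.1 * γ t h z.1 z.2

omit [Fintype Y] [Fintype U] in
theorem trajProb_zero (P : SysKer Y U) (γ : CtrlKer Y U) (h : Fin 0 → Y × U) :
    trajProb P γ 0 h = 1 := by
  simp [trajProb]

omit [Fintype Y] [Fintype U] in
theorem trajProb_snoc (P : SysKer Y U) (γ : CtrlKer Y U) (T : ℕ) (h : Fin T → Y × U)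
    (z : Y × U) : trajProb P γ (T + 1) (Fin.snoc h z) = trajProb P γ T h * stepProb P γ T h z := by
  have hlt : ∀ (t : Fin T) (i : Fin t), (i : ℕ) < T := fun t i => i.2.trans t.2
  simp [trajProb, stepProb, Fin.prod_univ_castSucc, Fin.snoc, hlt]

theorem trajProb_nonneg (hP : IsPmfSys P) (hγ : IsPmfCtrl γ) (T : ℕ) (h : Fin T → Y × U) :
    0 ≤ trajProb P γ T h :=
  prod_nonneg fun _ _ => mul_nonneg ((hP _ _).1 _) ((hγ _ _ _).1 _)

omit [Fintype Y] [Fintype U] in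
theorem stepProb_eq_zero_of_dom (hPQ : ∀ t h y, Q t h y = 0 → P t h y = 0) (t : ℕ)
    (h : Fin t → Y × U) (z : Y × U) (hz : stepProb Q γ t h z = 0) : stepProb P γ t h z = 0 := by
  rcases mul_eq_zero.1 hz with hQ | hγ
  · exact mul_eq_zero_of_left (hPQ t h z.1 hQ) _
  · exact mul_eq_zero_of_right _ hγ

omit [Fintype Y] [Fintype U] in
theorem trajProb_eq_zero_of_dom (hPQ : ∀ t h y, Q t h y = 0 → P t h y = 0) {T : ℕ}
    {h : Fin T → Y × U} (hQ : trajProb Q γ T h = 0) : trajProb P γ T h = 0 := by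
  obtain ⟨t, -, ht⟩ := prod_eq_zero_iff.1 hQ
  exact prod_eq_zero (mem_univ t) (stepProb_eq_zero_of_dom hPQ _ _ _ ht)

theorem sum_stepProb (hP : IsPmfSys P) (hγ : IsPmfCtrl γ) (t : ℕ) (h : Fin t → Y × U) :
    ∑ z, stepProb P γ t h z = 1 := by
  simp [stepProb, Fintype.sum_prod_type, ← mul_sum, (hγ t h _).2, (hP t h).2]

theorem sum_trajProb (hP : IsPmfSys P) (hγ : IsPmfCtrl γ) (T : ℕ) :
    ∑ h, trajProb P γ T h = 1 := by
  induction T with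
  | zero => simp [trajProb_zero]
  | succ T ih =>
    rw [← (snocProdEquiv _ T).sum_comp, Fintype.sum_prod_type]
    simp [snocProdEquiv_apply, trajProb_snoc, ← mul_sum, sum_stepProb hP hγ, ih]

theorem klFin_stepProb (hγ : IsPmfCtrl γ) (hPQ : ∀ t h y, Q t h y = 0 → P t h y = 0) (t : ℕ)
    (h : Fin t → Y × U) : klFin (stepProb P γ t h) (stepProb Q γ t h) = klFin (P t h) (Q t h) := by
  unfold stepProb
  rw [klFin_mul_kernel _ _ _ _ (fun y => (hγ t h y).2) (hPQ t h) fun _ _ => id]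
  simp [klFin_self]

theorem klFin_trajProb_succ (hP : IsPmfSys P) (hγ : IsPmfCtrl γ)
    (hPQ : ∀ t h y, Q t h y = 0 → P t h y = 0) (T : ℕ) :
    klFin (trajProb P γ (T + 1)) (trajProb Q γ (T + 1))
      = klFin (trajProb P γ T) (trajProb Q γ T) + ∑ h, trajProb P γ T h * klFin (P T h) (Q T h) := by
  rw [← klFin_comp_equiv (snocProdEquiv _ T)]
  simp only [Function.comp_def, snocProdEquiv_apply, trajProb_snoc]
  rw [klFin_mul_kernel (trajProb P γ T) (trajProb Q γ T) (stepProb P γ T) (stepProb Q γ T)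
    (sum_stepProb hP hγ T) (fun _ => trajProb_eq_zero_of_dom hPQ)
    (stepProb_eq_zero_of_dom hPQ T)]
  simp only [klFin_stepProb hγ hPQ]

theorem klFin_trajProb_eq_sum_range (hP : IsPmfSys P) (hγ : IsPmfCtrl γ)
    (hPQ : ∀ t h y, Q t h y = 0 → P t h y = 0) (T : ℕ) :
    klFin (trajProb P γ T) (trajProb Q γ T)
      = ∑ t ∈ range T, ∑ h, trajProb P γ t h * klFin (P t h) (Q t h) := by
  induction T with
  | zero => simp [klFin, trajProb_zero]
  | succ T ih => rw [klFin_trajProb_succ hP hγ hPQ, ih, sum_range_succ]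

end Trajectory

theorem meta_theorem_general {Y U : Type*} [Fintype Y] [Fintype U]
    (N T : ℕ) (hN : 2 ≤ N)
    (θ : Fin N → SysKer Y U) (hθ : ∀ i, IsPmfSys (θ i))
    (γ : CtrlKer Y U) (hγ : IsPmfCtrl γ)
    (Qk : ∀ t : ℕ, (Fin t → Y × U) → Y → ℝ)
    (hQk : ∀ t h, (∀ y, 0 ≤ Qk t h y) ∧ ∑ y, Qk t h y = 1)
    (hdom : ∀ t (h : Fin t → Y × U) y, Qk t h y = 0 → ∀ i, θ i t h y = 0)
    (est : (Fin T → Y × U) → Fin N) :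
    Real.log N *
        (⨅ i : Fin N, ∑ h ∈ Finset.univ.filter (fun h : Fin T → Y × U => est h = i),
          trajProb (θ i) γ T h)
      ≤ (∑ t ∈ Finset.range T, ∑ i : Fin N, (1 / (N : ℝ)) *
          ∑ h : Fin t → Y × U,
            trajProb (θ i) γ t h * klFin (θ i t h) (Qk t h))
        + Real.log 2 := by
  have hN₀ : 0 < N := by omega
  have hdomθ (i : Fin N) : ∀ t h y, Qk t h y = 0 → θ i t h y = 0 :=
    fun t h y hy => hdom t h y hy i
  set success := fun i => ∑ h ∈ univ.filter (est · = i), trajProb (θ i) γ T h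
  have hmin : (⨅ i, success i) ≤ (∑ i, success i) / N := by
    have := card_nsmul_le_sum univ success _ fun i _ => ciInf_le (Finite.bddBelow_range _) i
    rw [card_univ, Fintype.card_fin, nsmul_eq_mul] at this
    rwa [le_div_iff₀ (by positivity), mul_comm]
  calc log N * (⨅ i, success i) ≤ (∑ i, success i) / N * log N := by
        rw [mul_comm]
        exact mul_le_mul_of_nonneg_right hmin (log_natCast_nonneg N)
    _ ≤ (∑ i, klFin (trajProb (θ i) γ T) (trajProb Qk γ T)) / N + log 2 :=
        fano_inequality hN₀ (fun i => trajProb_nonneg (hθ i) hγ T)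
          (fun i => sum_trajProb (hθ i) hγ T) (trajProb_nonneg hQk hγ T) (sum_trajProb hQk hγ T)
          (fun i _ => trajProb_eq_zero_of_dom (hdomθ i)) est
    _ = _ := by
        simp_rw [klFin_trajProb_eq_sum_range (hθ _) hγ (hdomθ _), sum_div]
        rw [sum_comm]
        simp_rw [one_div_mul_eq_div, sum_div]

/-- **the Meta-Theorem.** Let `W` be uniform on `Fin N`, let the trajectory
`Z^T` be generated by interconnecting the randomly chosen system `θ_W` with the controller
`γ`. For any sequence of dominating auxiliary kernels `Qk` and any estimator `est` of `W`
from the trajectory,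
`(log N) · min_i P(est = i | W = i) ≤ Σ_{t<T} D(P_{Y_t|Z^{t-1},W} ‖ Qk_t | P) + log 2`. -/
theorem meta_theorem {Y U : Type*} [Fintype Y] [Fintype U]
    [DecidableEq Y] [DecidableEq U]
    (N T : ℕ) (hN : 2 ≤ N)
    (θ : Fin N → SysKer Y U) (hθ : ∀ i, IsPmfSys (θ i))
    (γ : CtrlKer Y U) (hγ : IsPmfCtrl γ)
    (Qk : ∀ t : ℕ, (Fin t → Y × U) → Y → ℝ)
    (hQk : ∀ t h, (∀ y, 0 ≤ Qk t h y) ∧ ∑ y, Qk t h y = 1)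
    (hdom : ∀ t (h : Fin t → Y × U) y, Qk t h y = 0 → ∀ i, θ i t h y = 0)
    (est : (Fin T → Y × U) → Fin N) :
    Real.log N *
        (⨅ i : Fin N, ∑ h ∈ Finset.univ.filter (fun h : Fin T → Y × U => est h = i),
          trajProb (θ i) γ T h)
      ≤ (∑ t ∈ Finset.range T, ∑ i : Fin N, (1 / (N : ℝ)) *
          ∑ h : Fin t → Y × U,
            trajProb (θ i) γ t h * klFin (θ i t h) (Qk t h))
        + Real.log 2 :=
  meta_theorem_general N T hN θ hθ γ hγ Qk hQk hdom est
end

section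
/- Let Y_{t+1} = A Y_t + U_t + V_{t+1} with U_t = −F_t Y_t where F_t ∈ ℝ^{n×n} may depend measurably on the past. Define G_T = Σ_{t=1}^T Y_t Y_tᵀ and, when G_T is invertible, the least-squares estimate Ã_T = (Σ_{t=1}^T F_t Y_t Y_tᵀ) G_T^{−1}. On the event {G_T/T ⪰ c·I}, one has the deterministic inequality ‖Ã_T − A‖² ≤ (1/(cT)) Σ_{t=1}^T ‖Y_{t+1} − V_{t+1}‖², where ‖·‖ on matrices is the operator norm. -/
open Matrix Finset

/-- The operator (spectral) norm of a square real matrix. -/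
noncomputable def opNorm {n : ℕ} (A : Matrix (Fin n) (Fin n) ℝ) : ℝ :=
  ‖(Matrix.toEuclideanCLM (𝕜 := ℝ) A : EuclideanSpace ℝ (Fin n) →L[ℝ] EuclideanSpace ℝ (Fin n))‖

/-!
With `E_t = Y_{t+1} - V_{t+1} = (A - F_t) Y_t` and `D = Σ_t E_t Y_tᵀ`, the feedback law gives
`Σ_t F_t Y_t Y_tᵀ = A G - D`, so `Ã_T - A = -D G⁻¹`. For a vector `x` put `z = G⁻¹ x`; then
`D G⁻¹ x = Σ_t ⟪Y_t, z⟫ E_t`, and Cauchy–Schwarz bounds its squared length by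
`(Σ_t ⟪Y_t, z⟫²) (Σ_t ‖E_t‖²) = ⟪x, z⟫ Σ_t ‖E_t‖²`. Finally `G ⪰ cT·I` forces
`cT ⟪x, z⟫ ≤ ‖x‖²`, by expanding `‖x - cT z‖² ≥ 0` and using `cT ‖z‖² ≤ ⟪G z, z⟫ = ⟪x, z⟫`.
-/

section DotProduct

variable {ι κ : Type*} [Fintype ι]

theorem dotProduct_self_nonneg (v : ι → ℝ) : 0 ≤ v ⬝ᵥ v := by
  simpa using dotProduct_star_self_nonneg v

theorem dotProduct_self_sum_smul_le (s : Finset κ) (a : κ → ℝ) (e : κ → ι → ℝ) :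
    (∑ t ∈ s, a t • e t) ⬝ᵥ (∑ t ∈ s, a t • e t)
      ≤ (∑ t ∈ s, a t ^ 2) * ∑ t ∈ s, e t ⬝ᵥ e t := by
  calc (∑ t ∈ s, a t • e t) ⬝ᵥ (∑ t ∈ s, a t • e t)
      = ∑ i, (∑ t ∈ s, a t * e t i) ^ 2 := by simp [dotProduct, Finset.sum_apply, sq]
    _ ≤ ∑ i, (∑ t ∈ s, a t ^ 2) * ∑ t ∈ s, e t i ^ 2 :=
        sum_le_sum fun i _ => sum_mul_sq_le_sq_mul_sq _ _ _
    _ = (∑ t ∈ s, a t ^ 2) * ∑ t ∈ s, e t ⬝ᵥ e t := by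
        rw [← mul_sum, sum_comm]
        simp [dotProduct, sq]

theorem mul_dotProduct_le_dotProduct_self {c : ℝ} (hc : 0 ≤ c) {z w : ι → ℝ}
    (h : c * (z ⬝ᵥ z) ≤ w ⬝ᵥ z) : c * (w ⬝ᵥ z) ≤ w ⬝ᵥ w := by
  have hsq := dotProduct_self_nonneg (w - c • z)
  simp only [sub_dotProduct, dotProduct_sub, smul_dotProduct, dotProduct_smul, smul_eq_mul,
    dotProduct_comm z w] at hsq
  nlinarith [mul_le_mul_of_nonneg_left h hc]

theorem sum_vecMulVec_mulVec (s : Finset κ) (e y : κ → ι → ℝ) (z : ι → ℝ) :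
    (∑ t ∈ s, vecMulVec (e t) (y t)) *ᵥ z = ∑ t ∈ s, (y t ⬝ᵥ z) • e t := by
  rw [sum_mulVec]
  simp [vecMulVec_mulVec]

theorem dotProduct_sum_vecMulVec_self_mulVec (s : Finset κ) (y : κ → ι → ℝ)
    (z : ι → ℝ) :
    z ⬝ᵥ ((∑ t ∈ s, vecMulVec (y t) (y t)) *ᵥ z) = ∑ t ∈ s, (y t ⬝ᵥ z) ^ 2 := by
  rw [sum_vecMulVec_mulVec, dotProduct_sum]
  refine sum_congr rfl fun t _ => ?_
  rw [dotProduct_smul, smul_eq_mul, dotProduct_comm, sq]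

end DotProduct

namespace Matrix.PosSemidef

variable {ι : Type*} [DecidableEq ι] {G : Matrix ι ι ℝ} {c : ℝ}

theorem posDef_of_sub_smul_one (hG : (G - c • 1).PosSemidef) (hc : 0 < c) : G.PosDef := by
  simpa using (PosDef.one.smul hc).add_posSemidef hG

variable [Fintype ι]

theorem mul_nonsing_inv_of_sub_smul_one (hG : (G - c • 1).PosSemidef) (hc : 0 < c) :
    G * G⁻¹ = 1 :=
  mul_nonsing_inv _ ((hG.posDef_of_sub_smul_one hc).isUnit.map detMonoidHom)

theorem mul_dotProduct_inv_mulVec_le (hG : (G - c • 1).PosSemidef) (hc : 0 < c) (x : ι → ℝ) :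
    c * (x ⬝ᵥ (G⁻¹ *ᵥ x)) ≤ x ⬝ᵥ x := by
  set z := G⁻¹ *ᵥ x
  have hGz : G *ᵥ z = x := by
    rw [mulVec_mulVec, hG.mul_nonsing_inv_of_sub_smul_one hc, one_mulVec]
  refine mul_dotProduct_le_dotProduct_self hc.le ?_
  have hquad := hG.dotProduct_mulVec_nonneg z
  simp only [star_trivial, sub_mulVec, dotProduct_sub, smul_mulVec, one_mulVec, dotProduct_smul,
    smul_eq_mul, hGz, dotProduct_comm z x] at hquad
  linarith

end Matrix.PosSemidef

section LeastSquares

variable {ι κ : Type*} [Fintype ι] [DecidableEq ι]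

theorem mul_dotProduct_self_sum_vecMulVec_mul_inv_mulVec_le (s : Finset κ) (e y : κ → ι → ℝ)
    {c : ℝ} (hc : 0 < c)
    (hG : ((∑ t ∈ s, vecMulVec (y t) (y t)) - c • (1 : Matrix ι ι ℝ)).PosSemidef)
    (x : ι → ℝ) :
    c * (((∑ t ∈ s, vecMulVec (e t) (y t)) * (∑ t ∈ s, vecMulVec (y t) (y t))⁻¹) *ᵥ x ⬝ᵥ
        ((∑ t ∈ s, vecMulVec (e t) (y t)) * (∑ t ∈ s, vecMulVec (y t) (y t))⁻¹) *ᵥ x)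
      ≤ (∑ t ∈ s, e t ⬝ᵥ e t) * (x ⬝ᵥ x) := by
  set G := ∑ t ∈ s, vecMulVec (y t) (y t)
  set M := (∑ t ∈ s, vecMulVec (e t) (y t)) * G⁻¹
  set z := G⁻¹ *ᵥ x
  have hMx : M *ᵥ x = ∑ t ∈ s, (y t ⬝ᵥ z) • e t := by
    rw [← mulVec_mulVec, sum_vecMulVec_mulVec]
  have hGz : G *ᵥ z = x := by
    rw [mulVec_mulVec, hG.mul_nonsing_inv_of_sub_smul_one hc, one_mulVec]
  have hquad : ∑ t ∈ s, (y t ⬝ᵥ z) ^ 2 = x ⬝ᵥ z := by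
    rw [← dotProduct_sum_vecMulVec_self_mulVec, hGz, dotProduct_comm]
  calc c * ((M *ᵥ x) ⬝ᵥ (M *ᵥ x))
      ≤ c * ((x ⬝ᵥ z) * ∑ t ∈ s, e t ⬝ᵥ e t) := by
        rw [hMx, ← hquad]
        exact mul_le_mul_of_nonneg_left (dotProduct_self_sum_smul_le _ _ _) hc.le
    _ = c * (x ⬝ᵥ z) * ∑ t ∈ s, e t ⬝ᵥ e t := by ring
    _ ≤ (x ⬝ᵥ x) * ∑ t ∈ s, e t ⬝ᵥ e t :=
        mul_le_mul_of_nonneg_right (hG.mul_dotProduct_inv_mulVec_le hc x)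
          (sum_nonneg fun t _ => dotProduct_self_nonneg (e t))
    _ = (∑ t ∈ s, e t ⬝ᵥ e t) * (x ⬝ᵥ x) := mul_comm _ _

end LeastSquares

theorem EuclideanSpace.norm_toLp_sq {ι : Type*} [Fintype ι] (x : ι → ℝ) :
    ‖WithLp.toLp 2 x‖ ^ 2 = x ⬝ᵥ x := by
  rw [← real_inner_self_eq_norm_sq, EuclideanSpace.inner_toLp_toLp, star_trivial]

theorem opNorm_neg {n : ℕ} (M : Matrix (Fin n) (Fin n) ℝ) : opNorm (-M) = opNorm M := by
  rw [opNorm, opNorm, map_neg, norm_neg]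

theorem opNorm_sq_le_of_dotProduct_self_mulVec_le {n : ℕ} {M : Matrix (Fin n) (Fin n) ℝ} {K : ℝ}
    (hK : 0 ≤ K) (h : ∀ x, (M *ᵥ x) ⬝ᵥ (M *ᵥ x) ≤ K * (x ⬝ᵥ x)) : opNorm M ^ 2 ≤ K := by
  have hle : opNorm M ≤ √K := by
    refine ContinuousLinearMap.opNorm_le_bound _ (Real.sqrt_nonneg K) fun x => ?_
    rw [← WithLp.toLp_ofLp 2 x, toEuclideanCLM_toLp, ← sq_le_sq₀ (norm_nonneg _) (by positivity),
      mul_pow, Real.sq_sqrt hK, EuclideanSpace.norm_toLp_sq, EuclideanSpace.norm_toLp_sq]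
    exact h _
  calc opNorm M ^ 2 ≤ √K ^ 2 := pow_le_pow_left₀ (norm_nonneg _) hle 2
    _ = K := Real.sq_sqrt hK

/-- **Lemma A.1.** For the closed-loop system `Y_{t+1} = A Y_t + U_t + V_{t+1}`
with feedback `U_t = −F_t Y_t`, on the event `{G_T/T ⪰ cI}` the least-squares estimate
`Ã_T = (Σ_t F_t Y_t Y_tᵀ) G_T⁻¹` satisfies
`‖Ã_T − A‖² ≤ (1/(cT)) Σ_t ‖Y_{t+1} − V_{t+1}‖²`. -/
theorem least_squares_identification_bound
    (n T : ℕ) (hT : 0 < T) (c : ℝ) (hc : 0 < c)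
    (A : Matrix (Fin n) (Fin n) ℝ)
    (F : ℕ → Matrix (Fin n) (Fin n) ℝ)
    (Y V U : ℕ → (Fin n → ℝ))
    (hrec : ∀ t < T, Y (t + 1) = A.mulVec (Y t) + U t + V (t + 1))
    (hfb : ∀ t < T, U t = -((F t).mulVec (Y t)))
    (hG : ((∑ t ∈ range T, vecMulVec (Y t) (Y t)) -
        (c * T) • (1 : Matrix (Fin n) (Fin n) ℝ)).PosSemidef) :
    opNorm ((∑ t ∈ range T, F t * vecMulVec (Y t) (Y t)) *
          (∑ t ∈ range T, vecMulVec (Y t) (Y t))⁻¹ - A) ^ 2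
      ≤ (1 / (c * T)) * ∑ t ∈ range T, ∑ i, (Y (t + 1) i - V (t + 1) i) ^ 2 := by
  set G := ∑ t ∈ range T, vecMulVec (Y t) (Y t)
  set E : ℕ → Fin n → ℝ := fun t => Y (t + 1) - V (t + 1)
  have hcT : 0 < c * T := by positivity
  have hE : ∀ t ∈ range T,
      F t * vecMulVec (Y t) (Y t) = A * vecMulVec (Y t) (Y t) - vecMulVec (E t) (Y t) := by
    intro t ht
    have hEt : E t = (A - F t) *ᵥ Y t := by
      simp only [E, hrec t (mem_range.mp ht), hfb t (mem_range.mp ht), sub_mulVec]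
      abel
    rw [hEt, ← mul_vecMulVec, sub_mul, sub_sub_cancel]
  have herr : (∑ t ∈ range T, F t * vecMulVec (Y t) (Y t)) * G⁻¹ - A
      = -((∑ t ∈ range T, vecMulVec (E t) (Y t)) * G⁻¹) := by
    rw [sum_congr rfl hE, sum_sub_distrib, ← mul_sum, sub_mul, mul_assoc,
      hG.mul_nonsing_inv_of_sub_smul_one hcT, mul_one]
    abel
  have hS : ∑ t ∈ range T, ∑ i, (Y (t + 1) i - V (t + 1) i) ^ 2
      = ∑ t ∈ range T, E t ⬝ᵥ E t := by
    simp [E, dotProduct, sq]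
  rw [herr, opNorm_neg, hS]
  refine opNorm_sq_le_of_dotProduct_self_mulVec_le
    (mul_nonneg (by positivity) (sum_nonneg fun t _ => dotProduct_self_nonneg (E t))) fun x => ?_
  have key := mul_le_mul_of_nonneg_left
    (mul_dotProduct_self_sum_vecMulVec_mul_inv_mulVec_le (range T) E Y hcT hG x)
    (one_div_nonneg.2 hcT.le)
  rwa [← mul_assoc, one_div_mul_cancel hcT.ne', one_mul, ← mul_assoc] at key
end
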